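/- arXiv:2104.03039 — 3 statements merged into one kernel-verified Lean document; each statement's English description precedes it below -/
import Mathlib

section
/- Suppose f_θ ≡ 0 (orthogonal forcing). Let (ŝ, μ̂, û) ∈ ℝ × ℝ × ℝ^m be a critical point of the forced amended potential, i.e. V'(ŝ) + (1/2)·μ̂²·(d/ds)(M₂₂(s)⁻¹)|_{s=ŝ} − f_s(û) = 0. Then for every θ⁰ ∈ ℝ the curve defined for all t ≥ 0 by s(t) = ŝ, v_s(t) = 0, θ(t) = θ⁰ + M₂₂(ŝ)⁻¹·μ̂·t, v_θ(t) = M₂₂(ŝ)⁻¹·μ̂, together with the constant control u(t) = û, is a solution of the system (EL). -/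
open Set

/-- The scalar Euler–Lagrange control system (EL): a curve `(s, vs, θ, vθ)` together with a
control `u` solves (EL) on the set `I` of times. -/
def IsELSolution {m : ℕ} (M11 M22 V : ℝ → ℝ) (fs fθ : (Fin m → ℝ) → ℝ)
    (s vs θ vθ : ℝ → ℝ) (u : ℝ → Fin m → ℝ) (I : Set ℝ) : Prop :=
  ∀ t ∈ I,
    HasDerivAt s (vs t) t ∧
    HasDerivAt vs ((M11 (s t))⁻¹ * ((1 / 2) * deriv M22 (s t) * (vθ t) ^ 2
      - (1 / 2) * deriv M11 (s t) * (vs t) ^ 2 - deriv V (s t) + fs (u t))) t ∧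
    HasDerivAt θ (vθ t) t ∧
    HasDerivAt vθ ((M22 (s t))⁻¹ * (-(deriv M22 (s t)) * vθ t * vs t + fθ (u t))) t

/-- a critical point of the forced amended potential generates a trim primitive,
i.e. the corresponding partially steady curve with constant control solves (EL). -/
theorem trim_from_critical_point_of_forced_amended_potential
    (m : ℕ) (M11 M22 V : ℝ → ℝ) (fs fθ : (Fin m → ℝ) → ℝ)
    (hM11 : ContDiff ℝ 2 M11) (hM22 : ContDiff ℝ 2 M22) (hV : ContDiff ℝ 2 V)
    (hM11ne : ∀ x, M11 x ≠ 0) (hM22ne : ∀ x, M22 x ≠ 0)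
    (hfs : ContDiff ℝ 1 fs) (hfθ : ContDiff ℝ 1 fθ)
    (horth : ∀ u, fθ u = 0)
    (shat muhat : ℝ) (uhat : Fin m → ℝ)
    (hcrit : deriv V shat + (1 / 2) * muhat ^ 2 * deriv (fun x => (M22 x)⁻¹) shat
      - fs uhat = 0)
    (θ0 : ℝ) :
    IsELSolution M11 M22 V fs fθ
      (fun _ => shat) (fun _ => 0)
      (fun t => θ0 + (M22 shat)⁻¹ * muhat * t) (fun _ => (M22 shat)⁻¹ * muhat)
      (fun _ => uhat) (Ici 0) := by
  intro t _
  have hM22d : HasDerivAt M22 (deriv M22 shat) shat :=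
    ((hM22.differentiable (by norm_num)) shat).hasDerivAt
  have hinv : deriv (fun x => (M22 x)⁻¹) shat =
      -(deriv M22 shat) / (M22 shat) ^ 2 := by
    have := (hM22d.inv (hM22ne shat)).deriv
    exact this
  refine ⟨hasDerivAt_const _ _, ?_, ?_, ?_⟩
  · have h0 : (1 / 2) * deriv M22 shat * ((M22 shat)⁻¹ * muhat) ^ 2
        - (1 / 2) * deriv M11 shat * (0:ℝ) ^ 2 - deriv V shat + fs uhat = 0 := by
      have hfs' : fs uhat = deriv V shat
          + (1 / 2) * muhat ^ 2 * (-(deriv M22 shat) / (M22 shat) ^ 2) := by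
        rw [hinv] at hcrit; linarith
      rw [hfs']
      field_simp
      ring
    rw [h0, mul_zero]
    exact hasDerivAt_const _ _
  · have : HasDerivAt (fun t : ℝ => θ0 + (M22 shat)⁻¹ * muhat * t)
        ((M22 shat)⁻¹ * muhat) t := by
      simpa using ((hasDerivAt_id t).const_mul ((M22 shat)⁻¹ * muhat)).const_add θ0
    exact this
  · simp only [horth, mul_zero, add_zero]
    simpa using hasDerivAt_const t ((M22 shat)⁻¹ * muhat)
end

section
/- (Manifold turnpike theorem.) Let n, m ∈ ℕ, let 𝒯 ⊆ ℝⁿ be nonempty, let 𝕏 ⊆ ℝⁿ, let ℓ : ℝⁿ × ℝᵐ → ℝ be continuous, let S : ℝⁿ → [0, ∞) be bounded on compact sets, let α be a 𝒦-function, and let B : [0, ∞) → [0, ∞) be bounded and increasing. Define ℓ*(x⁰) := inf_{û ∈ ℝᵐ} ℓ(x⁰, û) and assume ℓ* is real-valued and bounded on compact subsets of 𝕏. Suppose that for every x⁰ ∈ 𝕏 and every T > 0 there is a measurable control u*_{x⁰,T} : [0, T] → ℝᵐ and a measurable trajectory x*_{x⁰,T} : [0, T] → ℝⁿ with x*_{x⁰,T}(0)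 = x⁰ such that (i) strict dissipativity: S(x*_{x⁰,T}(T)) − S(x⁰) ≤ ∫₀ᵀ [ℓ(x*_{x⁰,T}(t), u*_{x⁰,T}(t)) − α(dist(x*_{x⁰,T}(t), 𝒯))] dt, and (ii) cost controllability: ∫₀ᵀ ℓ(x*_{x⁰,T}(t), u*_{x⁰,T}(t)) dt ≤ B(T)·ℓ*(x⁰). Then the manifold turnpike property holds: for every compact set K ⊆ 𝕏 and every ε > 0 there is a constant C_{K,ε} ≥ 0 such that for all x⁰ ∈ K and all T > 0, the Lebesgue measure of { t ∈ [0, T] : dist(x*_{x⁰,T}(t), 𝒯) > ε } is at most C_{K,ε}; one may take C_{K,ε} = (c₁(K) + c₂(K)) / α(ε), where c₁(K) = sup_{x ∈ K} S(x) and c₂(K) = sup_{x ∈ K, T > 0} B(T)·ℓ*(x). -/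
open Set MeasureTheory

/-- Manifold turnpike theorem. Strict dissipativity with respect to a manifold 𝒯
together with cost controllability implies the manifold (measure) turnpike property, with the
explicit constant `C_{K,ε} = (c₁(K) + c₂(K)) / α(ε)`. -/
theorem manifold_turnpike
    (n m : ℕ)
    (𝒯 : Set (EuclideanSpace ℝ (Fin n))) (h𝒯 : 𝒯.Nonempty)
    (𝕏 : Set (EuclideanSpace ℝ (Fin n)))
    (ℓ : EuclideanSpace ℝ (Fin n) → (Fin m → ℝ) → ℝ)
    (hℓ : Continuous fun p : EuclideanSpace ℝ (Fin n) × (Fin m → ℝ) => ℓ p.1 p.2)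
    -- storage function: nonnegative, bounded on compact sets
    (S : EuclideanSpace ℝ (Fin n) → ℝ) (hS0 : ∀ x, 0 ≤ S x)
    (hSbdd : ∀ K : Set (EuclideanSpace ℝ (Fin n)), IsCompact K → ∃ C, ∀ x ∈ K, S x ≤ C)
    -- 𝒦-function α
    (α : ℝ → ℝ) (hα0 : α 0 = 0) (hαcont : Continuous α)
    (hαmono : StrictMonoOn α (Ici 0))
    -- bounded increasing growth function B
    (B : ℝ → ℝ) (hBmono : MonotoneOn B (Ici 0)) (hBnonneg : ∀ T ≥ (0 : ℝ), 0 ≤ B T)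
    (hBbdd : ∃ C, ∀ T ≥ (0 : ℝ), B T ≤ C)
    -- ℓ*(x) = inf_u ℓ(x, u), real-valued, bounded on compact subsets of 𝕏
    (lstar : EuclideanSpace ℝ (Fin n) → ℝ)
    (hlstar : ∀ x, IsGLB (Set.range fun u => ℓ x u) (lstar x))
    (hlstarbdd : ∀ K ⊆ 𝕏, IsCompact K → ∃ C, ∀ x ∈ K, |lstar x| ≤ C)
    -- optimal trajectories and controls, parametrized by initial value and horizon
    (xstar : EuclideanSpace ℝ (Fin n) → ℝ → ℝ → EuclideanSpace ℝ (Fin n))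
    (ustar : EuclideanSpace ℝ (Fin n) → ℝ → ℝ → (Fin m → ℝ))
    (hmeas : ∀ x0 ∈ 𝕏, ∀ T > (0 : ℝ), Measurable (xstar x0 T) ∧ Measurable (ustar x0 T))
    (hinit : ∀ x0 ∈ 𝕏, ∀ T > (0 : ℝ), xstar x0 T 0 = x0)
    (hintℓ : ∀ x0 ∈ 𝕏, ∀ T > (0 : ℝ),
      IntegrableOn (fun t => ℓ (xstar x0 T t) (ustar x0 T t)) (Icc 0 T))
    (hintα : ∀ x0 ∈ 𝕏, ∀ T > (0 : ℝ),
      IntegrableOn (fun t => α (Metric.infDist (xstar x0 T t) 𝒯)) (Icc 0 T))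
    -- (i) strict dissipativity w.r.t. the manifold 𝒯 along optimal solutions
    (hdiss : ∀ x0 ∈ 𝕏, ∀ T > (0 : ℝ),
      S (xstar x0 T T) - S x0 ≤
        ∫ t in Icc (0 : ℝ) T,
          (ℓ (xstar x0 T t) (ustar x0 T t) - α (Metric.infDist (xstar x0 T t) 𝒯)))
    -- (ii) cost controllability
    (hcc : ∀ x0 ∈ 𝕏, ∀ T > (0 : ℝ),
      (∫ t in Icc (0 : ℝ) T, ℓ (xstar x0 T t) (ustar x0 T t)) ≤ B T * lstar x0) :
    -- manifold turnpike property, with the explicit constant (c₁(K) + c₂(K)) / α(ε)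
    ∀ K ⊆ 𝕏, IsCompact K → ∀ ε > (0 : ℝ), ∀ x0 ∈ K, ∀ T > (0 : ℝ),
      volume {t ∈ Icc (0 : ℝ) T | Metric.infDist (xstar x0 T t) 𝒯 > ε} ≤
        ENNReal.ofReal
          ((sSup (S '' K) + sSup {c : ℝ | ∃ x ∈ K, ∃ T' > (0 : ℝ), c = B T' * lstar x})
            / α ε) := by
  intro K hK hKcomp ε hε x0 hx0 T hT
  have hx0X : x0 ∈ 𝕏 := hK hx0
  set f : ℝ → ℝ := fun t => α (Metric.infDist (xstar x0 T t) 𝒯) with hf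
  have hαε : 0 < α ε := by
    have := hαmono (le_refl (0:ℝ)) (le_of_lt hε) hε
    rwa [hα0] at this
  have hαnonneg : ∀ d : ℝ, 0 ≤ d → 0 ≤ α d := by
    intro d hd
    rcases eq_or_lt_of_le hd with h | h
    · rw [← h, hα0]
    · have := hαmono (le_refl (0:ℝ)) (le_of_lt h) h
      rw [hα0] at this; exact this.le
  have hfnonneg : ∀ t, 0 ≤ f t := fun t =>
    hαnonneg _ (Metric.infDist_nonneg)
  -- bound on the integral of f
  have hintegral : (∫ t in Icc (0:ℝ) T, f t) ≤ S x0 + B T * lstar x0 := by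
    have hd := hdiss x0 hx0X T hT
    have hsub : (∫ t in Icc (0:ℝ) T,
        (ℓ (xstar x0 T t) (ustar x0 T t) - α (Metric.infDist (xstar x0 T t) 𝒯)))
        = (∫ t in Icc (0:ℝ) T, ℓ (xstar x0 T t) (ustar x0 T t))
          - ∫ t in Icc (0:ℝ) T, f t :=
      integral_sub (hintℓ x0 hx0X T hT) (hintα x0 hx0X T hT)
    rw [hsub] at hd
    have hST : 0 ≤ S (xstar x0 T T) := hS0 _
    have hccT := hcc x0 hx0X T hT
    linarith
  -- c₁ and c₂ bounds
  set c1 := sSup (S '' K) with hc1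
  set c2 := sSup {c : ℝ | ∃ x ∈ K, ∃ T' > (0:ℝ), c = B T' * lstar x} with hc2
  have hSx0 : S x0 ≤ c1 := by
    obtain ⟨C, hC⟩ := hSbdd K hKcomp
    exact le_csSup ⟨C, by rintro y ⟨x, hx, rfl⟩; exact hC x hx⟩ ⟨x0, hx0, rfl⟩
  have hBT : B T * lstar x0 ≤ c2 := by
    obtain ⟨CB, hCB⟩ := hBbdd
    obtain ⟨CK, hCK⟩ := hlstarbdd K hK hKcomp
    have hCB0 : 0 ≤ CB := le_trans (hBnonneg 0 le_rfl) (hCB 0 le_rfl)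
    refine le_csSup ⟨max (CB * CK) 0, ?_⟩ ⟨x0, hx0, T, hT, rfl⟩
    rintro y ⟨x, hx, T', hT', rfl⟩
    have h1 : 0 ≤ B T' := hBnonneg T' hT'.le
    have h2 : B T' ≤ CB := hCB T' hT'.le
    have h3 : |lstar x| ≤ CK := hCK x hx
    have h4 : lstar x ≤ CK := (abs_le.mp h3).2
    rcases le_or_gt 0 (lstar x) with h5 | h5
    · calc B T' * lstar x ≤ CB * CK := by nlinarith
        _ ≤ max (CB * CK) 0 := le_max_left _ _
    · calc B T' * lstar x ≤ 0 := by nlinarith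
        _ ≤ max (CB * CK) 0 := le_max_right _ _
  have hbound : (∫ t in Icc (0:ℝ) T, f t) ≤ c1 + c2 := by linarith
  -- Chebyshev
  have hmeasf : Measurable f := by
    have := (hmeas x0 hx0X T hT).1
    exact hαcont.measurable.comp
      ((Metric.continuous_infDist_pt 𝒯).measurable.comp this)
  have hcheb : α ε * ((volume.restrict (Icc (0:ℝ) T)) {t | α ε ≤ f t}).toReal
      ≤ ∫ t in Icc (0:ℝ) T, f t := by
    apply mul_meas_ge_le_integral_of_nonneg
    · exact Filter.Eventually.of_forall hfnonneg
    · exact hintα x0 hx0X T hT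
  set A := {t ∈ Icc (0:ℝ) T | Metric.infDist (xstar x0 T t) 𝒯 > ε} with hA
  have hAsub : volume A ≤ (volume.restrict (Icc (0:ℝ) T)) {t | α ε ≤ f t} := by
    rw [Measure.restrict_apply' measurableSet_Icc]
    apply measure_mono
    rintro t ⟨ht1, ht2⟩
    refine ⟨?_, ht1⟩
    exact (hαmono (le_of_lt hε) (le_trans hε.le ht2.le) ht2).le
  have hfin : (volume.restrict (Icc (0:ℝ) T)) {t | α ε ≤ f t} < ⊤ := by
    calc (volume.restrict (Icc (0:ℝ) T)) {t | α ε ≤ f t}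
        ≤ (volume.restrict (Icc (0:ℝ) T)) univ := measure_mono (subset_univ _)
      _ = volume (Icc (0:ℝ) T) := by
          rw [Measure.restrict_apply' measurableSet_Icc, univ_inter]
      _ < ⊤ := by rw [Real.volume_Icc]; exact ENNReal.ofReal_lt_top
  have hAfin : volume A < ⊤ := lt_of_le_of_lt hAsub hfin
  have hAtoReal : (volume A).toReal ≤ (c1 + c2) / α ε := by
    have h1 : (volume A).toReal ≤
        ((volume.restrict (Icc (0:ℝ) T)) {t | α ε ≤ f t}).toReal :=
      ENNReal.toReal_mono hfin.ne hAsub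
    rw [le_div_iff₀ hαε]
    calc (volume A).toReal * α ε
        ≤ ((volume.restrict (Icc (0:ℝ) T)) {t | α ε ≤ f t}).toReal * α ε := by
          exact mul_le_mul_of_nonneg_right h1 hαε.le
      _ = α ε * ((volume.restrict (Icc (0:ℝ) T)) {t | α ε ≤ f t}).toReal := mul_comm _ _
      _ ≤ ∫ t in Icc (0:ℝ) T, f t := hcheb
      _ ≤ c1 + c2 := hbound
  calc volume A = ENNReal.ofReal ((volume A).toReal) := by
        rw [ENNReal.ofReal_toReal hAfin.ne]
    _ ≤ ENNReal.ofReal ((c1 + c2) / α ε) := ENNReal.ofReal_le_ofReal hAtoReal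
end

section
/- (Optimal operation on the manifold.) Let n, m ∈ ℕ, let 𝒯 ⊆ ℝⁿ be nonempty, let ℓ : ℝⁿ × ℝᵐ → ℝ, let S : ℝⁿ → [0, ∞), and let α be a 𝒦-function. Fix x⁰ ∈ ℝⁿ and let (x, u) : [0, ∞) → ℝⁿ × ℝᵐ be measurable with t ↦ ℓ(x(t), u(t)) locally Lebesgue integrable. Suppose that for every T > 0 there exist a measurable trajectory x*_T : [0, T] → ℝⁿ with x*_T(0) = x⁰ and a measurable control u*_T : [0, T] → ℝᵐ such that (i) strict dissipativity: S(x*_T(T)) − S(x⁰) ≤ ∫₀ᵀ [ℓ(x*_T(t), u*_T(t)) − α(dist(x*_T(t), 𝒯))] dt, (ii) optimality: ∫₀ᵀ ℓ(x*_T(t), u*_T(t)) dt ≤ ∫₀ᵀ ℓ(x(t), u(t)) dt, and (iii) uniform boundedness of the storage at the terminal time: sup_{T > 0} S(x*_T(T)) < ∞. Then liminf_{T → ∞} (1/T)·∫₀ᵀ ℓ(x(t), u(t)) dt ≥ 0. -/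
open Set MeasureTheory Filter

/-- Optimal operation on the manifold. Under strict dissipativity with respect to
a manifold 𝒯 along optimal solutions, optimality of the comparison trajectories and uniform
boundedness of the storage at terminal times, every admissible control-state pair has
nonnegative asymptotic average cost. -/
theorem optimal_operation_on_manifold
    (n m : ℕ)
    (𝒯 : Set (EuclideanSpace ℝ (Fin n))) (h𝒯 : 𝒯.Nonempty)
    (ℓ : EuclideanSpace ℝ (Fin n) → (Fin m → ℝ) → ℝ)
    -- storage function, nonnegative
    (S : EuclideanSpace ℝ (Fin n) → ℝ) (hS0 : ∀ x, 0 ≤ S x)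
    -- 𝒦-function α
    (α : ℝ → ℝ) (hα0 : α 0 = 0) (hαcont : Continuous α)
    (hαmono : StrictMonoOn α (Ici 0))
    -- fixed initial value and an admissible state-control pair on [0, ∞)
    (x0 : EuclideanSpace ℝ (Fin n))
    (x : ℝ → EuclideanSpace ℝ (Fin n)) (u : ℝ → Fin m → ℝ)
    (hxmeas : Measurable x) (humeas : Measurable u)
    (hloc : ∀ T > (0 : ℝ), IntegrableOn (fun t => ℓ (x t) (u t)) (Icc 0 T))
    -- optimal trajectories and controls for every horizon T
    (xstar : ℝ → ℝ → EuclideanSpace ℝ (Fin n))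
    (ustar : ℝ → ℝ → (Fin m → ℝ))
    (hmeas : ∀ T > (0 : ℝ), Measurable (xstar T) ∧ Measurable (ustar T))
    (hinit : ∀ T > (0 : ℝ), xstar T 0 = x0)
    (hintℓ : ∀ T > (0 : ℝ), IntegrableOn (fun t => ℓ (xstar T t) (ustar T t)) (Icc 0 T))
    (hintα : ∀ T > (0 : ℝ),
      IntegrableOn (fun t => α (Metric.infDist (xstar T t) 𝒯)) (Icc 0 T))
    -- (i) strict dissipativity along optimal solutions
    (hdiss : ∀ T > (0 : ℝ),
      S (xstar T T) - S x0 ≤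
        ∫ t in Icc (0 : ℝ) T,
          (ℓ (xstar T t) (ustar T t) - α (Metric.infDist (xstar T t) 𝒯)))
    -- (ii) optimality of the comparison trajectories
    (hopt : ∀ T > (0 : ℝ),
      (∫ t in Icc (0 : ℝ) T, ℓ (xstar T t) (ustar T t)) ≤
        ∫ t in Icc (0 : ℝ) T, ℓ (x t) (u t))
    -- (iii) uniform boundedness of the storage at terminal times
    (hbdd : ∃ C : ℝ, ∀ T > (0 : ℝ), S (xstar T T) ≤ C) :
    0 ≤ atTop.liminf fun T : ℝ => (1 / T) * ∫ t in Icc (0 : ℝ) T, ℓ (x t) (u t) := by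

  -- Key pointwise-in-T lower bound: ∫ ℓ(x,u) ≥ -S x0 for all T > 0
  have key : ∀ T > (0 : ℝ), -S x0 ≤ ∫ t in Icc (0 : ℝ) T, ℓ (x t) (u t) := by
    intro T hT
    have hαnonneg : ∀ t, 0 ≤ α (Metric.infDist (xstar T t) 𝒯) := by
      intro t
      have hd : (0 : ℝ) ≤ Metric.infDist (xstar T t) 𝒯 := Metric.infDist_nonneg
      have := hαmono.monotoneOn (self_mem_Ici) (by exact hd) hd
      simpa [hα0] using this
    have hαint : (0 : ℝ) ≤ ∫ t in Icc (0 : ℝ) T, α (Metric.infDist (xstar T t) 𝒯) :=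
      setIntegral_nonneg measurableSet_Icc (fun t _ => hαnonneg t)
    have hsub :
        (∫ t in Icc (0 : ℝ) T,
          (ℓ (xstar T t) (ustar T t) - α (Metric.infDist (xstar T t) 𝒯))) =
        (∫ t in Icc (0 : ℝ) T, ℓ (xstar T t) (ustar T t)) -
          ∫ t in Icc (0 : ℝ) T, α (Metric.infDist (xstar T t) 𝒯) :=
      integral_sub (hintℓ T hT) (hintα T hT)
    have h1 := hdiss T hT
    rw [hsub] at h1
    have h2 : S (xstar T T) - S x0 ≤ ∫ t in Icc (0 : ℝ) T, ℓ (xstar T t) (ustar T t) := by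
      linarith
    have h3 : -S x0 ≤ ∫ t in Icc (0 : ℝ) T, ℓ (xstar T t) (ustar T t) := by
      have := hS0 (xstar T T); linarith
    exact h3.trans (hopt T hT)
  -- hence (1/T) * ∫ ≥ -S x0 / T for T > 0
  have key2 : ∀ᶠ T in atTop, -S x0 / T ≤ (1 / T) * ∫ t in Icc (0 : ℝ) T, ℓ (x t) (u t) := by
    filter_upwards [eventually_gt_atTop (0 : ℝ)] with T hT
    have h := key T hT
    rw [div_eq_inv_mul, one_div]
    exact mul_le_mul_of_nonneg_left h (by positivity)
  have hg : Tendsto (fun T : ℝ => -S x0 / T) atTop (nhds 0) :=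
    tendsto_const_nhds.div_atTop tendsto_id
  have hbd : IsBoundedUnder (· ≥ ·) atTop
      (fun T : ℝ => (1 / T) * ∫ t in Icc (0 : ℝ) T, ℓ (x t) (u t)) := by
    refine ⟨-S x0, eventually_map.mpr ?_⟩
    filter_upwards [eventually_ge_atTop (1 : ℝ)] with T hT
    have hT0 : (0 : ℝ) < T := lt_of_lt_of_le one_pos hT
    have h := key T hT0
    have h1 : -S x0 / T ≤ (1 / T) * ∫ t in Icc (0 : ℝ) T, ℓ (x t) (u t) := by
      rw [div_eq_inv_mul, one_div]
      exact mul_le_mul_of_nonneg_left h (by positivity)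
    have h2 : -S x0 ≤ -S x0 / T := by
      rw [le_div_iff₀ hT0]
      nlinarith [hS0 x0]
    simpa using h2.trans h1
  have hliminf_g : atTop.liminf (fun T : ℝ => -S x0 / T) = 0 := hg.liminf_eq
  by_cases hcb : IsCoboundedUnder (· ≥ ·) atTop
      (fun T : ℝ => (1 / T) * ∫ t in Icc (0 : ℝ) T, ℓ (x t) (u t))
  · calc (0 : ℝ) = atTop.liminf (fun T : ℝ => -S x0 / T) := hliminf_g.symm
      _ ≤ _ := liminf_le_liminf key2 hg.isBoundedUnder_ge hcb
  · have hnb : ¬ BddAbove {a : ℝ | ∀ᶠ T in atTop,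
        a ≤ (1 / T) * ∫ t in Icc (0 : ℝ) T, ℓ (x t) (u t)} := by
      rintro ⟨b, hb⟩
      exact hcb ⟨b, fun a ha => hb (eventually_map.mp ha)⟩
    rw [liminf_eq, Real.sSup_of_not_bddAbove hnb]
end
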